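/- arXiv:2602.05082 — 2 statements merged into one kernel-verified Lean document; each statement's English description precedes it below -/
import Mathlib

section
/- Fix a baseline x_0 ∈ ℝ^d and suppose ∇f is L-Lipschitz on a neighborhood containing the segments from x_0 to points near x, and ‖∇f‖ ≤ M on these paths. Define IG(x) = (x − x_0) ⊙ ∫₀¹ ∇f(x_0 + α(x − x_0)) dα (componentwise product). Then for all sufficiently small δ, ‖IG(x+δ) − IG(x)‖ ≤ (M + (L/2)·‖x − x_0‖)·‖δ‖; in particular IG is locally Lipschitz at x with constant M + (L/2)·‖x − x_0‖. -/
open intervalIntegral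

/-- Hadamard (componentwise) product on `ℝ^n`. -/
noncomputable def had {n : ℕ} (u v : EuclideanSpace ℝ (Fin n)) :
    EuclideanSpace ℝ (Fin n) :=
  WithLp.toLp 2 (fun i => u i * v i)

/-- Integrated Gradients attribution with baseline `x₀` and gradient field `gradf`. -/
noncomputable def IG {n : ℕ} (gradf : EuclideanSpace ℝ (Fin n) → EuclideanSpace ℝ (Fin n))
    (x₀ x : EuclideanSpace ℝ (Fin n)) : EuclideanSpace ℝ (Fin n) :=
  had (x - x₀) (∫ α in (0:ℝ)..1, gradf (x₀ + α • (x - x₀)))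

/-!
Write `I(z) = ∫₀¹ ∇f(x₀ + α (z - x₀)) dα`, so that `IG(z) = (z - x₀) ⊙ I(z)`. The product rule
`IG(x+δ) - IG(x) = δ ⊙ I(x+δ) + (x - x₀) ⊙ (I(x+δ) - I(x))` together with `‖u ⊙ v‖ ≤ ‖u‖‖v‖`
reduces the claim to `‖I(x+δ)‖ ≤ M` and `‖I(x+δ) - I(x)‖ ≤ L‖δ‖/2`. The latter holds because at
time `α` the two integration paths are `α‖δ‖` apart, and `∫₀¹ α dα = 1/2`.
-/

section Hadamard

variable {n : ℕ}

theorem norm_had_le (u v : EuclideanSpace ℝ (Fin n)) : ‖had u v‖ ≤ ‖u‖ * ‖v‖ := by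
  have hcoord : ∀ i, ‖had u v i‖ ^ 2 ≤ ‖u i‖ ^ 2 * ‖v‖ ^ 2 := fun i => by
    rw [← mul_pow]
    exact pow_le_pow_left₀ (norm_nonneg _)
      ((norm_mul_le _ _).trans (by gcongr; exact PiLp.norm_apply_le v i)) 2
  rw [EuclideanSpace.norm_eq (had u v), EuclideanSpace.norm_eq u]
  calc √(∑ i, ‖had u v i‖ ^ 2) ≤ √(∑ i, ‖u i‖ ^ 2 * ‖v‖ ^ 2) :=
        Real.sqrt_le_sqrt (Finset.sum_le_sum fun i _ => hcoord i)
    _ = √(∑ i, ‖u i‖ ^ 2) * ‖v‖ := by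
        rw [← Finset.sum_mul, Real.sqrt_mul (by positivity), Real.sqrt_sq (norm_nonneg v)]

theorem had_sub_had (u u' v v' : EuclideanSpace ℝ (Fin n)) :
    had u' v' - had u v = had (u' - u) v' + had u (v' - v) := by
  ext i
  simp only [had, PiLp.sub_apply, PiLp.add_apply]
  ring

end Hadamard

section Integral

variable {E : Type*} [NormedAddCommGroup E] [NormedSpace ℝ E]

theorem continuousOn_comp_ray_of_norm_sub_le {F : Type*} [SeminormedAddCommGroup F] {g : E → F}
    {x₀ z : E} {L : ℝ} {s : Set ℝ}
    (hg : ∀ a ∈ s, ∀ b ∈ s, ‖g (x₀ + a • (z - x₀)) - g (x₀ + b • (z - x₀))‖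
      ≤ L * ‖(x₀ + a • (z - x₀)) - (x₀ + b • (z - x₀))‖) :
    ContinuousOn (fun α : ℝ => g (x₀ + α • (z - x₀))) s := by
  refine (LipschitzOnWith.of_dist_le_mul fun a ha b hb => ?_).continuousOn
    (K := (L * ‖z - x₀‖).toNNReal)
  have hpath : (x₀ + a • (z - x₀)) - (x₀ + b • (z - x₀)) = (a - b) • (z - x₀) := by module
  calc dist (g (x₀ + a • (z - x₀))) (g (x₀ + b • (z - x₀)))
      ≤ L * ‖(a - b) • (z - x₀)‖ := by rw [dist_eq_norm, ← hpath]; exact hg a ha b hb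
    _ = L * ‖z - x₀‖ * dist a b := by rw [norm_smul, Real.dist_eq, Real.norm_eq_abs]; ring
    _ ≤ (L * ‖z - x₀‖).toNNReal * dist a b := by gcongr; exact Real.le_coe_toNNReal _

theorem norm_integral_sub_integral_le_half {g h : ℝ → E} {C : ℝ}
    (hg : IntervalIntegrable g MeasureTheory.volume 0 1)
    (hh : IntervalIntegrable h MeasureTheory.volume 0 1)
    (hgh : ∀ t ∈ Set.Icc (0 : ℝ) 1, ‖g t - h t‖ ≤ C * t) :
    ‖(∫ t in (0:ℝ)..1, g t) - ∫ t in (0:ℝ)..1, h t‖ ≤ C / 2 := by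
  rw [← integral_sub hg hh]
  calc ‖∫ t in (0:ℝ)..1, g t - h t‖ ≤ ∫ t in (0:ℝ)..1, C * t :=
        norm_integral_le_of_norm_le zero_le_one
          (MeasureTheory.ae_of_all _ fun t ht => hgh t (Set.Ioc_subset_Icc_self ht))
          ((continuous_const_mul C).intervalIntegrable 0 1)
    _ = C / 2 := by rw [integral_const_mul, integral_id]; ring

end Integral

theorem ig_perturbation_stability_general {n : ℕ}
    (gradf : EuclideanSpace ℝ (Fin n) → EuclideanSpace ℝ (Fin n))
    (x₀ x : EuclideanSpace ℝ (Fin n)) (L M ρ : ℝ)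
    (hlip : ∀ α ∈ Set.Icc (0:ℝ) 1, ∀ β ∈ Set.Icc (0:ℝ) 1,
      ∀ z ∈ Metric.closedBall x ρ, ∀ w ∈ Metric.closedBall x ρ,
      ‖gradf (x₀ + α • (z - x₀)) - gradf (x₀ + β • (w - x₀))‖
        ≤ L * ‖(x₀ + α • (z - x₀)) - (x₀ + β • (w - x₀))‖)
    (hbound : ∀ α ∈ Set.Icc (0:ℝ) 1, ∀ z ∈ Metric.closedBall x ρ,
      ‖gradf (x₀ + α • (z - x₀))‖ ≤ M) :
    ∀ δ : EuclideanSpace ℝ (Fin n), ‖δ‖ ≤ ρ →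
      ‖IG gradf x₀ (x + δ) - IG gradf x₀ x‖
        ≤ (M + (L / 2) * ‖x - x₀‖) * ‖δ‖ := by
  intro δ hδ
  have hx : x ∈ Metric.closedBall x ρ := Metric.mem_closedBall_self ((norm_nonneg δ).trans hδ)
  have hxδ : x + δ ∈ Metric.closedBall x ρ := by simpa [dist_eq_norm] using hδ
  have hint : ∀ z ∈ Metric.closedBall x ρ,
      IntervalIntegrable (fun α : ℝ => gradf (x₀ + α • (z - x₀))) MeasureTheory.volume 0 1 :=
    fun z hz => (continuousOn_comp_ray_of_norm_sub_le
      fun a ha b hb => hlip a ha b hb z hz z hz).intervalIntegrable_of_Icc zero_le_one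
  have hbound_int : ‖∫ α in (0:ℝ)..1, gradf (x₀ + α • (x + δ - x₀))‖ ≤ M := by
    simpa using norm_integral_le_of_norm_le_const fun t ht =>
      hbound t (Set.Ioc_subset_Icc_self (Set.uIoc_of_le (zero_le_one (α := ℝ)) ▸ ht)) _ hxδ
  have hdiff_int : ‖(∫ α in (0:ℝ)..1, gradf (x₀ + α • (x + δ - x₀)))
      - ∫ α in (0:ℝ)..1, gradf (x₀ + α • (x - x₀))‖ ≤ L * ‖δ‖ / 2 :=
    norm_integral_sub_integral_le_half (hint _ hxδ) (hint _ hx) fun t ht => by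
      have hpath : (x₀ + t • (x + δ - x₀)) - (x₀ + t • (x - x₀)) = t • δ := by module
      calc _ ≤ L * ‖t • δ‖ := hpath ▸ hlip t ht t ht _ hxδ _ hx
        _ = L * ‖δ‖ * t := by rw [norm_smul, Real.norm_of_nonneg ht.1]; ring
  rw [IG, IG, had_sub_had, sub_sub_sub_cancel_right, add_sub_cancel_left]
  calc _ ≤ ‖δ‖ * M + ‖x - x₀‖ * (L * ‖δ‖ / 2) :=
        (norm_add_le _ _).trans (add_le_add
          ((norm_had_le _ _).trans (by gcongr)) ((norm_had_le _ _).trans (by gcongr)))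
    _ = (M + (L / 2) * ‖x - x₀‖) * ‖δ‖ := by ring

/-- IG satisfies perturbation stability. If `∇f` is `L`-Lipschitz on a
neighborhood containing the integration segments from `x₀` to points near `x`, and
`‖∇f‖ ≤ M` along these paths, then for all sufficiently small `δ`,
`‖IG(x+δ) - IG(x)‖ ≤ (M + (L/2)·‖x - x₀‖)·‖δ‖`; in particular IG is locally
Lipschitz at `x` with constant `M + (L/2)·‖x - x₀‖`. -/
theorem ig_perturbation_stability {n : ℕ}
    (f : EuclideanSpace ℝ (Fin n) → ℝ)
    (gradf : EuclideanSpace ℝ (Fin n) → EuclideanSpace ℝ (Fin n))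
    (hgrad : ∀ y, HasGradientAt f (gradf y) y)
    (x₀ x : EuclideanSpace ℝ (Fin n)) (L M ρ : ℝ)
    (hL : 0 ≤ L) (hM : 0 ≤ M) (hρ : 0 < ρ)
    (hlip : ∀ α ∈ Set.Icc (0:ℝ) 1, ∀ β ∈ Set.Icc (0:ℝ) 1,
      ∀ z ∈ Metric.closedBall x ρ, ∀ w ∈ Metric.closedBall x ρ,
      ‖gradf (x₀ + α • (z - x₀)) - gradf (x₀ + β • (w - x₀))‖
        ≤ L * ‖(x₀ + α • (z - x₀)) - (x₀ + β • (w - x₀))‖)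
    (hbound : ∀ α ∈ Set.Icc (0:ℝ) 1, ∀ z ∈ Metric.closedBall x ρ,
      ‖gradf (x₀ + α • (z - x₀))‖ ≤ M) :
    ∀ δ : EuclideanSpace ℝ (Fin n), ‖δ‖ ≤ ρ →
      ‖IG gradf x₀ (x + δ) - IG gradf x₀ x‖
        ≤ (M + (L / 2) * ‖x - x₀‖) * ‖δ‖ :=
  ig_perturbation_stability_general gradf x₀ x L M ρ hlip hbound
end

section
/- Suppose f : ℝ^d → ℝ satisfies f(P_π x) = f(x) for every permutation π of a redundant index set R (fixing indices outside R), and the baseline x_0 is R-symmetric (P_π x_0 = x_0). Then IG(P_π x) = P_π IG(x) for every R-permutation π; consequently, at any input x that is constant on R (x_i = x_j for all i, j ∈ R, and similarly for x_0), the IG attributions are equal on R: IG_i(x) = IG_j(x) for all i, j ∈ R. -/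
open intervalIntegral

/-- Coordinate-permutation operator `(P_π y)_i = y_{π i}`. -/
def permOp {n : ℕ} (π : Equiv.Perm (Fin n)) (y : EuclideanSpace ℝ (Fin n)) :
    EuclideanSpace ℝ (Fin n) :=
  WithLp.toLp 2 (fun i => y (π i))

/-!
A symmetry `A` of `f` that is a linear isometry is also a symmetry of its gradient field: by the
chain rule `∇(f ∘ A)(y) = A⁻¹ ∇f(A y)`, and `f ∘ A = f`. A coordinate permutation `P_π` fixing
the baseline maps the straight-line path from `x₀` to `x` onto the one from `x₀` to `P_π x`, and it
commutes with the integral and with the Hadamard product, so `IG(P_π x) = P_π IG(x)`. If `x` is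
constant on `R`, the transposition `τ` of `i, j ∈ R` fixes `x`, so `IG(x) = P_τ IG(x)`, i.e.
`IG_i(x) = IG_j(x)`.
-/

theorem LinearIsometryEquiv.map_gradient_of_comp_eq {E : Type*} [NormedAddCommGroup E]
    [InnerProductSpace ℝ E] [CompleteSpace E] (A : E ≃ₗᵢ[ℝ] E) {f : E → ℝ} (hf : f ∘ A = f)
    {g : E → E} (hg : ∀ y, HasGradientAt f (g y) y) (y : E) : g (A y) = A (g y) := by
  have hcomp := (hg (A y)).hasFDerivAt.comp y A.toContinuousLinearEquiv.hasFDerivAt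
  have hdual : (InnerProductSpace.toDual ℝ E (g (A y))).comp
      (A.toContinuousLinearEquiv : E →L[ℝ] E) = InnerProductSpace.toDual ℝ E (A.symm (g (A y))) := by
    ext v
    simp [← A.symm.inner_map_map (g (A y)) (A v)]
  rw [hdual] at hcomp
  have hA : HasGradientAt f (A.symm (g (A y))) y := by
    rw [hasGradientAt_iff_hasFDerivAt, ← hf]
    exact hcomp
  rw [← A.symm_apply_eq]
  exact hA.unique (hg y)

section permOp

variable {n : ℕ}

noncomputable def permLIE (π : Equiv.Perm (Fin n)) :
    EuclideanSpace ℝ (Fin n) ≃ₗᵢ[ℝ] EuclideanSpace ℝ (Fin n) :=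
  LinearIsometryEquiv.piLpCongrLeft 2 ℝ ℝ π.symm

theorem coe_permLIE (π : Equiv.Perm (Fin n)) : ⇑(permLIE π) = permOp π := rfl

theorem permOp_swap_of_apply_eq {i j : Fin n} {x : EuclideanSpace ℝ (Fin n)} (h : x i = x j) :
    permOp (Equiv.swap i j) x = x := by
  ext k
  simp only [permOp, Equiv.swap_apply_def]
  split_ifs with hki hkj
  · rw [hki, h]
  · rw [hkj, h]
  · rfl

theorem had_permOp (π : Equiv.Perm (Fin n)) (u v : EuclideanSpace ℝ (Fin n)) :
    had (permOp π u) (permOp π v) = permOp π (had u v) := rfl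

theorem intervalIntegral_permOp (π : Equiv.Perm (Fin n)) (g : ℝ → EuclideanSpace ℝ (Fin n))
    (a b : ℝ) : ∫ α in a..b, permOp π (g α) = permOp π (∫ α in a..b, g α) :=
  (permLIE π).toLinearIsometry.intervalIntegral_comp_comm g

theorem gradient_permOp {f : EuclideanSpace ℝ (Fin n) → ℝ}
    {gradf : EuclideanSpace ℝ (Fin n) → EuclideanSpace ℝ (Fin n)}
    (hgrad : ∀ y, HasGradientAt f (gradf y) y) {π : Equiv.Perm (Fin n)}
    (hf : ∀ y, f (permOp π y) = f y) (y : EuclideanSpace ℝ (Fin n)) :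
    gradf (permOp π y) = permOp π (gradf y) :=
  (permLIE π).map_gradient_of_comp_eq (funext hf) hgrad y

theorem IG_permOp {gradf : EuclideanSpace ℝ (Fin n) → EuclideanSpace ℝ (Fin n)}
    {π : Equiv.Perm (Fin n)} (hgrad : ∀ y, gradf (permOp π y) = permOp π (gradf y))
    {x₀ : EuclideanSpace ℝ (Fin n)} (hx₀ : permOp π x₀ = x₀) (x : EuclideanSpace ℝ (Fin n)) :
    IG gradf x₀ (permOp π x) = permOp π (IG gradf x₀ x) := by
  have hdiff : permOp π x - x₀ = permOp π (x - x₀) := by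
    rw [← coe_permLIE, map_sub, coe_permLIE, hx₀]
  have hpath : ∀ α : ℝ, x₀ + α • permOp π (x - x₀) = permOp π (x₀ + α • (x - x₀)) := by
    intro α
    rw [← coe_permLIE, map_add, map_smul, coe_permLIE, hx₀]
  simp only [IG, hdiff, hpath, hgrad, intervalIntegral_permOp, had_permOp]

end permOp

/-- IG redundancy symmetry. If `f (P_π x) = f x` for every
permutation `π` of a redundant index set `R` (fixing indices outside `R`), and the
baseline `x₀` is `R`-symmetric, then `IG (P_π x) = P_π (IG x)` for every
`R`-permutation `π`; consequently, at any input `x` that is constant on `R`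
(with `x₀` also constant on `R`), the IG attributions are equal on `R`. -/
theorem ig_redundancy_symmetry {n : ℕ}
    (f : EuclideanSpace ℝ (Fin n) → ℝ)
    (gradf : EuclideanSpace ℝ (Fin n) → EuclideanSpace ℝ (Fin n))
    (hgrad : ∀ y, HasGradientAt f (gradf y) y)
    (R : Set (Fin n)) (x₀ : EuclideanSpace ℝ (Fin n))
    (hsym : ∀ π : Equiv.Perm (Fin n), (∀ i ∉ R, π i = i) →
      ∀ y : EuclideanSpace ℝ (Fin n), f (permOp π y) = f y)
    (hbase : ∀ π : Equiv.Perm (Fin n), (∀ i ∉ R, π i = i) → permOp π x₀ = x₀)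
    (x : EuclideanSpace ℝ (Fin n)) :
    (∀ π : Equiv.Perm (Fin n), (∀ i ∉ R, π i = i) →
      IG gradf x₀ (permOp π x) = permOp π (IG gradf x₀ x)) ∧
    ((∀ i ∈ R, ∀ j ∈ R, x i = x j) → (∀ i ∈ R, ∀ j ∈ R, x₀ i = x₀ j) →
      ∀ i ∈ R, ∀ j ∈ R, IG gradf x₀ x i = IG gradf x₀ x j) := by
  have equivariant : ∀ π : Equiv.Perm (Fin n), (∀ i ∉ R, π i = i) →
      IG gradf x₀ (permOp π x) = permOp π (IG gradf x₀ x) := fun π hπ =>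
    IG_permOp (gradient_permOp hgrad (hsym π hπ)) (hbase π hπ) x
  refine ⟨equivariant, fun hx _ i hi j hj => ?_⟩
  have hswap : ∀ k ∉ R, Equiv.swap i j k = k := fun k hk =>
    Equiv.swap_apply_of_ne_of_ne (ne_of_mem_of_not_mem hi hk).symm
      (ne_of_mem_of_not_mem hj hk).symm
  have h := congrArg (· i) (equivariant (Equiv.swap i j) hswap)
  rw [permOp_swap_of_apply_eq (hx i hi j hj)] at h
  simpa [permOp] using h
end
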